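/- arXiv:2411.08468 — 5 statements merged into one kernel-verified Lean document; each statement's English description precedes it below -/
import Mathlib

section
/- Let p ≥ 1, let Σ̂ be a p×p real symmetric positive definite matrix, and let μ > 0, τ > 0. Consider the feasible set F = {(L,S) : L a p×p real symmetric positive semidefinite matrix, S a p×p real symmetric positive definite matrix}. Suppose (L̂, Ŝ) ∈ F is a global minimizer over F of the ℓ1-regularized objective f(L,S) + τ‖S‖₁, where ‖S‖₁ = Σ_{i,j} |S_{ij}|. Then for every λ > 0, (L̂, Ŝ) is not a local minimizer over F of the ℓ0-regularized objective H(L,S) = f(L,S) + λ‖S‖₀. -/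
/-!
Scaling a feasible point along the ray `s ↦ (s • L̂, s • Ŝ)` stays feasible, and along it
`f` equals `f(L̂, Ŝ) + (s - 1) a - μ p log s` with `a = tr L̂ + μ tr((L̂ + Ŝ) Σ̂⁻¹)`. The ℓ1 penalty
scales linearly while the ℓ0 penalty is constant, so the first-order conditions at `s = 1`
would give both `a + τ ‖Ŝ‖₁ = μ p` (ℓ1 global minimality) and `a = μ p` (ℓ0 local minimality),
contradicting `‖Ŝ‖₁ > 0`.
-/

open Matrix

/-- The smooth part of the factor-analysis objective:
`f(L,S) = tr L + μ (tr((L+S) Σ̂⁻¹) − log det (L+S))`. -/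
noncomputable def faObj {p : ℕ} (μ : ℝ) (SigHat L S : Matrix (Fin p) (Fin p) ℝ) : ℝ :=
  L.trace + μ * (((L + S) * SigHat⁻¹).trace - Real.log ((L + S).det))

/-- The ℓ0 "norm": number of nonzero entries. -/
noncomputable def l0Norm {p : ℕ} (S : Matrix (Fin p) (Fin p) ℝ) : ℕ :=
  {ij : Fin p × Fin p | S ij.1 ij.2 ≠ 0}.ncard

/-- The elementwise ℓ1 norm. -/
noncomputable def l1Norm {p : ℕ} (S : Matrix (Fin p) (Fin p) ℝ) : ℝ :=
  ∑ i, ∑ j, |S i j|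

/-- Squared Frobenius norm. -/
noncomputable def frobSq {p : ℕ} (A : Matrix (Fin p) (Fin p) ℝ) : ℝ :=
  ∑ i, ∑ j, (A i j) ^ 2

open Filter Topology

theorem eq_of_isLocalMin_mul_sub_mul_log {a b : ℝ}
    (h : IsLocalMin (fun s => s * a - b * Real.log s) 1) : a = b := by
  have hderiv : HasDerivAt (fun s => s * a - b * Real.log s) (1 * a - b * 1⁻¹) 1 :=
    ((hasDerivAt_id 1).mul_const a).sub ((Real.hasDerivAt_log one_ne_zero).const_mul b)
  linarith [h.hasDerivAt_eq_zero hderiv]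

section Ray

variable {p : ℕ}

theorem faObj_smul (μ : ℝ) (SigHat L S : Matrix (Fin p) (Fin p) ℝ) {s : ℝ} (hs : s ≠ 0)
    (hdet : (L + S).det ≠ 0) :
    faObj μ SigHat (s • L) (s • S) = faObj μ SigHat L S
      + (s - 1) * (L.trace + μ * ((L + S) * SigHat⁻¹).trace) - μ * p * Real.log s := by
  rw [faObj, faObj, ← smul_add, smul_mul, trace_smul, trace_smul, det_smul,
    Real.log_mul (pow_ne_zero _ hs) hdet, Real.log_pow, Fintype.card_fin, smul_eq_mul, smul_eq_mul]
  ring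

theorem l1Norm_smul (s : ℝ) (S : Matrix (Fin p) (Fin p) ℝ) :
    l1Norm (s • S) = |s| * l1Norm S := by
  simp [l1Norm, abs_mul, Finset.mul_sum]

theorem l0Norm_smul {s : ℝ} (hs : s ≠ 0) (S : Matrix (Fin p) (Fin p) ℝ) :
    l0Norm (s • S) = l0Norm S := by
  simp [l0Norm, hs]

theorem l1Norm_pos {S : Matrix (Fin p) (Fin p) ℝ} {i j : Fin p} (h : S i j ≠ 0) :
    0 < l1Norm S :=
  calc 0 < |S i j| := abs_pos.mpr h
    _ ≤ ∑ j', |S i j'| :=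
      Finset.single_le_sum (f := fun j' => |S i j'|) (fun _ _ => abs_nonneg _) (Finset.mem_univ j)
    _ ≤ l1Norm S :=
      Finset.single_le_sum (f := fun i' => ∑ j', |S i' j'|)
        (fun _ _ => Finset.sum_nonneg fun _ _ => abs_nonneg _) (Finset.mem_univ i)

theorem eventually_frobDist_smul_lt (L S : Matrix (Fin p) (Fin p) ℝ) {ε : ℝ} (hε : 0 < ε) :
    ∀ᶠ s in 𝓝 (1 : ℝ), Real.sqrt (frobSq (s • L - L) + frobSq (s • S - S)) < ε := by
  have hcont : Continuous fun s : ℝ => Real.sqrt (frobSq (s • L - L) + frobSq (s • S - S)) := by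
    unfold frobSq
    fun_prop
  exact hcont.continuousAt.eventually_lt continuousAt_const (by simpa [frobSq] using hε)

end Ray

theorem l1_global_min_not_l0_local_min_general {p : ℕ} (hp : 1 ≤ p)
    (SigHat : Matrix (Fin p) (Fin p) ℝ)
    (μ τ : ℝ) (hτ : 0 < τ)
    (Lhat Shat : Matrix (Fin p) (Fin p) ℝ)
    (hLhat : Lhat.PosSemidef) (hShat : Shat.PosDef)
    (hglobal : ∀ L S : Matrix (Fin p) (Fin p) ℝ, L.PosSemidef → S.PosDef →
      faObj μ SigHat Lhat Shat + τ * l1Norm Shat ≤ faObj μ SigHat L S + τ * l1Norm S) :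
    ∀ lam : ℝ, 0 < lam →
      ¬ ∃ ε : ℝ, 0 < ε ∧
        ∀ L S : Matrix (Fin p) (Fin p) ℝ, L.PosSemidef → S.PosDef →
          Real.sqrt (frobSq (L - Lhat) + frobSq (S - Shat)) < ε →
          faObj μ SigHat Lhat Shat + lam * (l0Norm Shat : ℝ) ≤
            faObj μ SigHat L S + lam * (l0Norm S : ℝ) := by
  rintro lam - ⟨ε, hε, hloc⟩
  have hdet : (Lhat + Shat).det ≠ 0 := (PosDef.posSemidef_add hLhat hShat).det_pos.ne'
  set a := Lhat.trace + μ * ((Lhat + Shat) * SigHat⁻¹).trace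
  have hl1 : a + τ * l1Norm Shat = μ * p := by
    refine eq_of_isLocalMin_mul_sub_mul_log ?_
    filter_upwards [lt_mem_nhds one_pos] with s hs
    have := hglobal _ _ (hLhat.smul hs.le) (hShat.smul hs)
    rw [faObj_smul μ SigHat Lhat Shat hs.ne' hdet, l1Norm_smul, abs_of_pos hs] at this
    simp only [Real.log_one]
    linarith
  have hl0 : a = μ * p := by
    refine eq_of_isLocalMin_mul_sub_mul_log ?_
    filter_upwards [lt_mem_nhds one_pos, eventually_frobDist_smul_lt Lhat Shat hε] with s hs hclose
    have := hloc _ _ (hLhat.smul hs.le) (hShat.smul hs) hclose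
    rw [faObj_smul μ SigHat Lhat Shat hs.ne' hdet, l0Norm_smul hs.ne'] at this
    simp only [Real.log_one]
    linarith
  have hN : 0 < l1Norm Shat := l1Norm_pos (hShat.diag_pos (i := ⟨0, hp⟩)).ne'
  linarith [mul_pos hτ hN]

/-- Any global minimizer of the ℓ1-regularized objective over the feasible set
`F = {(L,S) : L PSD, S PD}` fails to be a local minimizer (in the Frobenius norm)
of the ℓ0-regularized objective, for every λ > 0. -/
theorem l1_global_min_not_l0_local_min {p : ℕ} (hp : 1 ≤ p)
    (SigHat : Matrix (Fin p) (Fin p) ℝ) (hSig : SigHat.PosDef)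
    (μ τ : ℝ) (hμ : 0 < μ) (hτ : 0 < τ)
    (Lhat Shat : Matrix (Fin p) (Fin p) ℝ)
    (hLhat : Lhat.PosSemidef) (hShat : Shat.PosDef)
    (hglobal : ∀ L S : Matrix (Fin p) (Fin p) ℝ, L.PosSemidef → S.PosDef →
      faObj μ SigHat Lhat Shat + τ * l1Norm Shat ≤ faObj μ SigHat L S + τ * l1Norm S) :
    ∀ lam : ℝ, 0 < lam →
      ¬ ∃ ε : ℝ, 0 < ε ∧
        ∀ L S : Matrix (Fin p) (Fin p) ℝ, L.PosSemidef → S.PosDef →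
          Real.sqrt (frobSq (L - Lhat) + frobSq (S - Shat)) < ε →
          faObj μ SigHat Lhat Shat + lam * (l0Norm Shat : ℝ) ≤
            faObj μ SigHat L S + lam * (l0Norm S : ℝ) :=
  l1_global_min_not_l0_local_min_general hp SigHat μ τ hτ Lhat Shat hLhat hShat hglobal
end

section
/- Let A be a symmetric invertible p×p real matrix with inverse Y = A⁻¹, let i ≠ j be indices, set Δ = Y_{ii}·Y_{jj} − Y_{ij}², and let δ ∈ ℝ satisfy q(δ) := −Δ·δ² + 2·Y_{ij}·δ + 1 ≠ 0. Then B := A + δ·(e_i e_jᵀ + e_j e_iᵀ) is invertible and the (i,j) entry of B⁻¹ equals (−Δ·δ + Y_{ij})/q(δ). -/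
/-!
Write the update as a rank-two product `U * V` with `U = [eᵢ eⱼ]` and `V = δ [eⱼ eᵢ]ᵀ`. The matrix
determinant lemma and the Woodbury identity then reduce both claims to the `2 × 2` capacitance
matrix `1 + V A⁻¹ U = !![1 + δ Yⱼᵢ, δ Yⱼⱼ; δ Yᵢᵢ, 1 + δ Yᵢⱼ]`, whose determinant is `q(δ)` once
`Y = A⁻¹` is symmetric.
-/

open Matrix

namespace Matrix

variable {n : Type*} [DecidableEq n]

section CommRing

variable {R : Type*} [CommRing R]

theorem single_add_single_eq_mul (i j : n) (δ : R) :
    single i j δ + single j i δ =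
      (1 : Matrix n n R).submatrix id ![i, j] * (δ • (1 : Matrix n n R).submatrix ![j, i] id) := by
  ext k l
  simp only [add_apply, single_apply, mul_apply, Fin.sum_univ_two, submatrix_apply, smul_apply,
    one_apply, id_eq, cons_val_zero, cons_val_one, cons_val_fin_one, smul_eq_mul]
  grind

variable [Fintype n]

theorem mul_one_submatrix_id {m l : Type*} (M : Matrix m n R) (e : l → n) :
    M * (1 : Matrix n n R).submatrix id e = M.submatrix id e := by
  ext; simp [mul_apply, one_apply]

theorem one_submatrix_id_mul {m l : Type*} (M : Matrix n m R) (e : l → n) :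
    (1 : Matrix n n R).submatrix e id * M = M.submatrix e id := by
  ext; simp [mul_apply, one_apply]

theorem one_add_smul_submatrix_one_mul_mul_submatrix_one (Y : Matrix n n R) (i j : n) (δ : R) :
    1 + δ • (1 : Matrix n n R).submatrix ![j, i] id * Y * (1 : Matrix n n R).submatrix id ![i, j] =
      !![1 + δ * Y j i, δ * Y j j; δ * Y i i, 1 + δ * Y i j] := by
  rw [smul_mul, one_submatrix_id_mul, smul_mul, mul_one_submatrix_id, submatrix_submatrix]
  ext s t
  rw [add_apply, smul_apply, submatrix_apply, smul_eq_mul]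
  fin_cases s <;> fin_cases t <;> simp

theorem det_add_single_add_single {A : Matrix n n R} (hA : IsUnit A.det) (i j : n) (δ : R) :
    (A + single i j δ + single j i δ).det =
      A.det * ((1 + δ * A⁻¹ j i) * (1 + δ * A⁻¹ i j) - δ * A⁻¹ j j * (δ * A⁻¹ i i)) := by
  rw [add_assoc, single_add_single_eq_mul, det_add_mul _ _ hA,
    one_add_smul_submatrix_one_mul_mul_submatrix_one, det_fin_two_of]

theorem inv_add_single_add_single {A : Matrix n n R} (hA : IsUnit A.det) (i j : n) (δ : R)
    (hM : IsUnit ((1 + δ * A⁻¹ j i) * (1 + δ * A⁻¹ i j) - δ * A⁻¹ j j * (δ * A⁻¹ i i))) :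
    (A + single i j δ + single j i δ)⁻¹ =
      A⁻¹ - A⁻¹.submatrix id ![i, j] *
        !![1 + δ * A⁻¹ j i, δ * A⁻¹ j j; δ * A⁻¹ i i, 1 + δ * A⁻¹ i j]⁻¹ *
          (δ • A⁻¹.submatrix ![j, i] id) := by
  have hA' : IsUnit A := (isUnit_iff_isUnit_det A).mpr hA
  rw [add_assoc, single_add_single_eq_mul,
    ← Matrix.mul_one ((1 : Matrix n n R).submatrix id ![i, j]),
    add_mul_mul_inv_eq_sub _ _ _ _ hA' isUnit_one]
  · rw [inv_one, one_add_smul_submatrix_one_mul_mul_submatrix_one, Matrix.mul_assoc _ _ A⁻¹,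
      smul_mul, one_submatrix_id_mul, mul_one_submatrix_id]
  · rwa [inv_one, one_add_smul_submatrix_one_mul_mul_submatrix_one, isUnit_iff_isUnit_det,
      det_fin_two_of]

theorem IsSymm.det_add_single_add_single {A : Matrix n n R} (hsymm : A.IsSymm)
    (hA : IsUnit A.det) (i j : n) (δ : R) :
    (A + single i j δ + single j i δ).det =
      A.det * (-(A⁻¹ i i * A⁻¹ j j - A⁻¹ i j ^ 2) * δ ^ 2 + 2 * A⁻¹ i j * δ + 1) := by
  rw [Matrix.det_add_single_add_single hA, hsymm.inv.apply]
  ring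

end CommRing

theorem IsSymm.inv_add_single_add_single_apply [Fintype n] {K : Type*} [Field K] {A : Matrix n n K}
    (hsymm : A.IsSymm) (hA : IsUnit A.det) (i j : n) (δ : K)
    (hq : -(A⁻¹ i i * A⁻¹ j j - A⁻¹ i j ^ 2) * δ ^ 2 + 2 * A⁻¹ i j * δ + 1 ≠ 0) :
    (A + single i j δ + single j i δ)⁻¹ i j =
      (-(A⁻¹ i i * A⁻¹ j j - A⁻¹ i j ^ 2) * δ + A⁻¹ i j) /
        (-(A⁻¹ i i * A⁻¹ j j - A⁻¹ i j ^ 2) * δ ^ 2 + 2 * A⁻¹ i j * δ + 1) := by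
  have hYji : A⁻¹ j i = A⁻¹ i j := hsymm.inv.apply i j
  have hM : (1 + δ * A⁻¹ j i) * (1 + δ * A⁻¹ i j) - δ * A⁻¹ j j * (δ * A⁻¹ i i) =
      -(A⁻¹ i i * A⁻¹ j j - A⁻¹ i j ^ 2) * δ ^ 2 + 2 * A⁻¹ i j * δ + 1 := by
    rw [hYji]; ring
  rw [inv_add_single_add_single hA i j δ (hM ▸ hq.isUnit)]
  generalize A⁻¹ = Y at *
  set q := -(Y i i * Y j j - Y i j ^ 2) * δ ^ 2 + 2 * Y i j * δ + 1 with hqdef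
  rw [inv_def, adjugate_fin_two_of, det_fin_two_of, hM]
  simp only [sub_apply, mul_apply, Fin.sum_univ_two, smul_apply, submatrix_apply, smul_eq_mul,
    id_eq, of_apply, cons_val', cons_val_zero, cons_val_one, cons_val_fin_one, Ring.inverse_eq_inv',
    hYji]
  field_simp
  rw [hqdef]
  ring

end Matrix

theorem inv_entry_offdiag_update_general {p : ℕ} (A : Matrix (Fin p) (Fin p) ℝ)
    (hsymm : A.IsSymm) (hA : IsUnit A.det) (i j : Fin p) (δ : ℝ)
    (hq : -(A⁻¹ i i * A⁻¹ j j - (A⁻¹ i j) ^ 2) * δ ^ 2 + 2 * A⁻¹ i j * δ + 1 ≠ 0) :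
    IsUnit (A + Matrix.single i j δ + Matrix.single j i δ).det ∧
    (A + Matrix.single i j δ + Matrix.single j i δ)⁻¹ i j =
      (-(A⁻¹ i i * A⁻¹ j j - (A⁻¹ i j) ^ 2) * δ + A⁻¹ i j) /
        (-(A⁻¹ i i * A⁻¹ j j - (A⁻¹ i j) ^ 2) * δ ^ 2 + 2 * A⁻¹ i j * δ + 1) := by
  refine ⟨?_, hsymm.inv_add_single_add_single_apply hA i j δ hq⟩
  rw [hsymm.det_add_single_add_single hA]
  exact hA.mul hq.isUnit

/-- Woodbury formula for the symmetric rank-two update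
`B = A + δ(eᵢeⱼᵀ + eⱼeᵢᵀ)` with `i ≠ j`: if
`q(δ) = −Δ δ² + 2 Yᵢⱼ δ + 1 ≠ 0`, where `Y = A⁻¹` and `Δ = Yᵢᵢ Yⱼⱼ − Yᵢⱼ²`,
then `B` is invertible and `(B⁻¹)ᵢⱼ = (−Δ δ + Yᵢⱼ)/q(δ)`. -/
theorem inv_entry_offdiag_update {p : ℕ} (A : Matrix (Fin p) (Fin p) ℝ)
    (hsymm : A.IsSymm) (hA : IsUnit A.det) (i j : Fin p) (hij : i ≠ j) (δ : ℝ)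
    (hq : -(A⁻¹ i i * A⁻¹ j j - (A⁻¹ i j) ^ 2) * δ ^ 2 + 2 * A⁻¹ i j * δ + 1 ≠ 0) :
    IsUnit (A + Matrix.single i j δ + Matrix.single j i δ).det ∧
    (A + Matrix.single i j δ + Matrix.single j i δ)⁻¹ i j =
      (-(A⁻¹ i i * A⁻¹ j j - (A⁻¹ i j) ^ 2) * δ + A⁻¹ i j) /
        (-(A⁻¹ i i * A⁻¹ j j - (A⁻¹ i j) ^ 2) * δ ^ 2 + 2 * A⁻¹ i j * δ + 1) :=
  inv_entry_offdiag_update_general A hsymm hA i j δ hq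
end

section
/- Let A be a symmetric invertible p×p real matrix with inverse Y = A⁻¹, let i ≠ j be indices, set Δ = Y_{ii}·Y_{jj} − Y_{ij}², and let δ ∈ ℝ. Then det(A + δ·(e_i e_jᵀ + e_j e_iᵀ)) = det(A)·(−Δ·δ² + 2·Y_{ij}·δ + 1). -/
/-!
The update δ(eᵢeⱼᵀ + eⱼeᵢᵀ) is the rank-two product U V with U = δ[eᵢ eⱼ] and V = [eⱼ eᵢ]ᵀ.
By the matrix determinant lemma, det(A + U V) = det A · det(I₂ + V A⁻¹ U), and the 2 × 2 matrix
I₂ + V A⁻¹ U = [[1 + δYⱼᵢ, δYⱼⱼ], [δYᵢᵢ, 1 + δYᵢⱼ]] has the stated determinant once Yⱼᵢ = Yᵢⱼ.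
-/

open Matrix

namespace Matrix

variable {m n α : Type*}

theorem single_eq_vecMulVec_single [DecidableEq m] [DecidableEq n] [MulZeroOneClass α]
    (i : m) (j : n) (a : α) :
    single i j a = vecMulVec (Pi.single i a) (Pi.single j 1) := by
  ext k l
  simp only [single, vecMulVec_apply, of_apply, Pi.single_apply]
  split_ifs <;> simp_all

theorem vecMulVec_add_vecMulVec_eq_mul [NonUnitalNonAssocSemiring α] (u u' : m → α)
    (v v' : n → α) :
    vecMulVec u v + vecMulVec u' v' = (of ![u, u'])ᵀ * of ![v, v'] := by
  ext k l
  simp [mul_apply, Fin.sum_univ_two, vecMulVec_apply]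

theorem det_add_vecMulVec_add_vecMulVec [Fintype m] [DecidableEq m] [CommRing α]
    {A : Matrix m m α} (hA : IsUnit A.det) (u v u' v' : m → α) :
    (A + vecMulVec u v + vecMulVec u' v').det =
      A.det * ((1 + v ⬝ᵥ A⁻¹ *ᵥ u) * (1 + v' ⬝ᵥ A⁻¹ *ᵥ u') -
        v ⬝ᵥ A⁻¹ *ᵥ u' * (v' ⬝ᵥ A⁻¹ *ᵥ u)) := by
  have hcap : 1 + of ![v, v'] * A⁻¹ * (of ![u, u'])ᵀ =
      !![1 + v ⬝ᵥ A⁻¹ *ᵥ u, v ⬝ᵥ A⁻¹ *ᵥ u'; v' ⬝ᵥ A⁻¹ *ᵥ u, 1 + v' ⬝ᵥ A⁻¹ *ᵥ u'] := by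
    ext a b
    rw [add_apply, Matrix.mul_assoc, mul_apply]
    fin_cases a <;> fin_cases b <;> simp [mul_apply, dotProduct, mulVec, Finset.mul_sum]
  rw [add_assoc, vecMulVec_add_vecMulVec_eq_mul, det_add_mul _ _ hA, hcap, det_fin_two_of]

end Matrix

theorem det_offdiag_update_general {p : ℕ} (A : Matrix (Fin p) (Fin p) ℝ)
    (hsymm : A.IsSymm) (hA : IsUnit A.det) (i j : Fin p) (δ : ℝ) :
    (A + Matrix.single i j δ + Matrix.single j i δ).det =
      A.det * (-(A⁻¹ i i * A⁻¹ j j - (A⁻¹ i j) ^ 2) * δ ^ 2 + 2 * A⁻¹ i j * δ + 1) := by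
  rw [single_eq_vecMulVec_single, single_eq_vecMulVec_single,
    det_add_vecMulVec_add_vecMulVec hA]
  simp only [mulVec_single, single_dotProduct, one_mul, Pi.smul_apply, col_apply, op_smul_eq_mul,
    hsymm.inv.apply j i]
  ring

/-- Determinant of the symmetric rank-two update: for symmetric invertible `A`
with `Y = A⁻¹`, `i ≠ j`, and `Δ = Yᵢᵢ Yⱼⱼ − Yᵢⱼ²`,
`det(A + δ(eᵢeⱼᵀ + eⱼeᵢᵀ)) = det A · (−Δ δ² + 2 Yᵢⱼ δ + 1)`. -/
theorem det_offdiag_update {p : ℕ} (A : Matrix (Fin p) (Fin p) ℝ)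
    (hsymm : A.IsSymm) (hA : IsUnit A.det) (i j : Fin p) (hij : i ≠ j) (δ : ℝ) :
    (A + Matrix.single i j δ + Matrix.single j i δ).det =
      A.det * (-(A⁻¹ i i * A⁻¹ j j - (A⁻¹ i j) ^ 2) * δ ^ 2 + 2 * A⁻¹ i j * δ + 1) :=
  det_offdiag_update_general A hsymm hA i j δ
end

section
/- Let a > 0, b > 0, y ∈ ℝ with Δ := a·b − y² > 0, and let d ≠ 0. Define δ* = y/Δ + (Δ − √(Δ² + 4·d²·a·b))/(2·Δ·d). Then −Δ·δ* + y = d·(−Δ·(δ*)² + 2·y·δ* + 1) and −Δ·(δ*)² + 2·y·δ* + 1 = (√(Δ² + 4·d²·a·b) − Δ)/(2·d²) > 0; consequently δ* lies in the domain {δ : −Δ·δ² + 2·y·δ + 1 > 0} and is a stationary point of g(δ) = −log(−Δ·δ² + 2·y·δ + 1) + 2·d·δ there. -/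
/-!
Write `t = Δ δ - y`. Because `Δ = a b - y²`, the quadratic satisfies `Δ q(δ) = a b - t²`, while
`q'(δ) = -2 t`; so `δ` is a stationary point of `g` exactly when `d (a b - t²) = -Δ t`, a quadratic
equation in `t` whose root `t = (Δ - √(Δ² + 4 d² a b)) / (2 d)` is the one defining `δ*`. Since
`a b > y² ≥ 0`, the square root exceeds `Δ`, which makes `q(δ*)` positive.
-/

open Real

lemma mul_quadratic_eq_sub_sq (a b y δ : ℝ) :
    (a * b - y ^ 2) * (-(a * b - y ^ 2) * δ ^ 2 + 2 * y * δ + 1)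
      = a * b - ((a * b - y ^ 2) * δ - y) ^ 2 := by
  ring

lemma sub_sq_div_eq_of_sq_eq {Δ c d s : ℝ} (hd : d ≠ 0) (hs : s ^ 2 = Δ ^ 2 + 4 * d ^ 2 * c) :
    c - ((Δ - s) / (2 * d)) ^ 2 = Δ * ((s - Δ) / (2 * d ^ 2)) := by
  field_simp
  linear_combination (-1 : ℝ) * hs

lemma hasDerivAt_quadratic (Δ y x : ℝ) :
    HasDerivAt (fun δ : ℝ => -Δ * δ ^ 2 + 2 * y * δ + 1) (2 * (-Δ * x + y)) x := by
  refine ((((hasDerivAt_pow 2 x).const_mul (-Δ)).add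
    ((hasDerivAt_id x).const_mul (2 * y))).add_const 1).congr_deriv ?_
  simp only [Nat.cast_ofNat]
  ring

lemma hasDerivAt_neg_log_add_mul_eq_zero {q : ℝ → ℝ} {q' c x : ℝ} (hq : HasDerivAt q q' x)
    (hx : q x ≠ 0) (hcrit : q' = c * q x) :
    HasDerivAt (fun δ => -log (q δ) + c * δ) 0 x := by
  refine ((hq.log hx).neg.add ((hasDerivAt_id x).const_mul c)).congr_deriv ?_
  rw [hcrit, mul_div_cancel_right₀ c hx]
  ring

theorem scalar_offdiag_subproblem_d_nonzero_general (a b y d : ℝ)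
    (hΔ : 0 < a * b - y ^ 2) (hd : d ≠ 0) :
    let Δ : ℝ := a * b - y ^ 2;
    let δs : ℝ := y / Δ + (Δ - Real.sqrt (Δ ^ 2 + 4 * d ^ 2 * a * b)) / (2 * Δ * d);
    let q : ℝ → ℝ := fun δ => -Δ * δ ^ 2 + 2 * y * δ + 1;
    (-Δ * δs + y = d * q δs) ∧
    q δs = (Real.sqrt (Δ ^ 2 + 4 * d ^ 2 * a * b) - Δ) / (2 * d ^ 2) ∧
    0 < q δs ∧
    HasDerivAt (fun δ : ℝ => -Real.log (q δ) + 2 * d * δ) 0 δs := by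
  intro Δ δs q
  set s := √(Δ ^ 2 + 4 * d ^ 2 * a * b)
  have hab : 0 < a * b := by nlinarith [sq_nonneg y]
  have hd2ab : 0 < 4 * d ^ 2 * a * b := by
    rw [mul_assoc]; exact mul_pos (by positivity) hab
  have hs_sq : s ^ 2 = Δ ^ 2 + 4 * d ^ 2 * (a * b) := by
    rw [sq_sqrt (by positivity), ← mul_assoc]
  have hΔs : Δ < s := (lt_sqrt hΔ.le).2 (by linarith)
  have ht : Δ * δs - y = (Δ - s) / (2 * d) := by
    have hΔ0 : Δ ≠ 0 := hΔ.ne'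
    show Δ * (y / Δ + (Δ - s) / (2 * Δ * d)) - y = _
    field_simp
    ring
  have hq : q δs = (s - Δ) / (2 * d ^ 2) := by
    refine mul_left_cancel₀ hΔ.ne' ?_
    rw [show Δ * q δs = a * b - (Δ * δs - y) ^ 2 from mul_quadratic_eq_sub_sq a b y δs, ht]
    exact sub_sq_div_eq_of_sq_eq hd hs_sq
  have hq_pos : 0 < q δs := hq ▸ div_pos (sub_pos.2 hΔs) (by positivity)
  have hlin : -Δ * δs + y = d * q δs := by
    rw [hq, show -Δ * δs + y = -(Δ * δs - y) by ring, ht]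
    field_simp
    ring
  refine ⟨hlin, hq, hq_pos,
    hasDerivAt_neg_log_add_mul_eq_zero (hasDerivAt_quadratic Δ y δs) hq_pos.ne' ?_⟩
  linear_combination 2 * hlin

/-- The scalar off-diagonal subproblem with `d ≠ 0`: with `Δ = a b − y² > 0` and
`δ* = y/Δ + (Δ − √(Δ² + 4 d² a b))/(2 Δ d)`, one has
`−Δ δ* + y = d q(δ*)` and `q(δ*) = (√(Δ² + 4 d² a b) − Δ)/(2 d²) > 0`, where
`q(δ) = −Δ δ² + 2 y δ + 1`; consequently `δ*` lies in the domain of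
`g(δ) = −log q(δ) + 2 d δ` and is a stationary point of `g`. -/
theorem scalar_offdiag_subproblem_d_nonzero (a b y d : ℝ)
    (ha : 0 < a) (hb : 0 < b) (hΔ : 0 < a * b - y ^ 2) (hd : d ≠ 0) :
    let Δ : ℝ := a * b - y ^ 2;
    let δs : ℝ := y / Δ + (Δ - Real.sqrt (Δ ^ 2 + 4 * d ^ 2 * a * b)) / (2 * Δ * d);
    let q : ℝ → ℝ := fun δ => -Δ * δ ^ 2 + 2 * y * δ + 1;
    (-Δ * δs + y = d * q δs) ∧
    q δs = (Real.sqrt (Δ ^ 2 + 4 * d ^ 2 * a * b) - Δ) / (2 * d ^ 2) ∧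
    0 < q δs ∧
    HasDerivAt (fun δ : ℝ => -Real.log (q δ) + 2 * d * δ) 0 δs :=
  scalar_offdiag_subproblem_d_nonzero_general a b y d hΔ hd
end

section
/- Let Σ̂ be a p×p real symmetric positive definite matrix, μ > 0, λ > 0, and let L be a p×p real symmetric positive semidefinite matrix. Suppose S is a p×p real symmetric positive definite matrix that is a local minimizer, over the set of p×p real symmetric positive definite matrices, of the map S' ↦ f(L, S') + λ‖S'‖₀. Then for every pair of indices (i,j) with S_{ij} ≠ 0, one has [(L+S)⁻¹]_{ij} = [Σ̂⁻¹]_{ij}. -/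
open Matrix

/-- Frobenius norm. -/
noncomputable def frobNorm {p : ℕ} (A : Matrix (Fin p) (Fin p) ℝ) : ℝ :=
  Real.sqrt (∑ i, ∑ j, (A i j) ^ 2)

/-!
Perturb `S` along the symmetric direction `E = eᵢeⱼᵀ + eⱼeᵢᵀ`. For small `t` the matrix `S + tE`
is still positive definite, lies in the given Frobenius ball, and has the same support as `S`
(because `S` is symmetric and `Sᵢⱼ ≠ 0`), so the `ℓ0` penalty does not change and
`t ↦ f(L, S + tE)` has a local minimum at `0`. Its derivative there is
`μ (tr(E Σ̂⁻¹) - tr((L+S)⁻¹ E)) = 2μ ([Σ̂⁻¹]ᵢⱼ - [(L+S)⁻¹]ᵢⱼ)`, by Jacobi's formula.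
-/

open Filter Topology Polynomial

theorem eventually_abs_mul_lt {c : ℝ} (hc : 0 < c) (k : ℝ) : ∀ᶠ t in 𝓝 (0 : ℝ), |t| * k < c :=
  (Continuous.tendsto' (by fun_prop) 0 0 (by simp)).eventually (gt_mem_nhds hc)

namespace Matrix

variable {n : Type*}

theorem hasDerivAt_det_one_add_smul [Fintype n] [DecidableEq n] {𝕜 : Type*}
    [NontriviallyNormedField 𝕜] (M : Matrix n n 𝕜) :
    HasDerivAt (fun t : 𝕜 => (1 + t • M).det) M.trace 0 := by
  have h : (fun t : 𝕜 => (1 + t • M).det) = fun t => (det (1 + (X : 𝕜[X]) • M.map C)).eval t := by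
    funext t
    simp [eval_det, ← smul_eq_mul_diagonal]
  rw [h, ← derivative_det_one_add_X_smul]
  exact Polynomial.hasDerivAt _ _

theorem hasDerivAt_det_add_smul [Fintype n] [DecidableEq n] {𝕜 : Type*} [NontriviallyNormedField 𝕜]
    {A : Matrix n n 𝕜} (hA : IsUnit A.det) (E : Matrix n n 𝕜) :
    HasDerivAt (fun t : 𝕜 => (A + t • E).det) (A.det * (A⁻¹ * E).trace) 0 := by
  have h : ∀ t : 𝕜, A + t • E = A * (1 + t • (A⁻¹ * E)) := fun t => by
    rw [Matrix.mul_add, Matrix.mul_one, Matrix.mul_smul, ← Matrix.mul_assoc, mul_nonsing_inv A hA,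
      Matrix.one_mul]
  simp_rw [h, det_mul]
  exact (hasDerivAt_det_one_add_smul _).const_mul _

theorem hasDerivAt_log_det_add_smul [Fintype n] [DecidableEq n] {A : Matrix n n ℝ} (hA : A.det ≠ 0)
    (E : Matrix n n ℝ) :
    HasDerivAt (fun t : ℝ => Real.log (A + t • E).det) (A⁻¹ * E).trace 0 := by
  simpa [hA] using (hasDerivAt_det_add_smul hA.isUnit E).log (by simpa using hA)

theorem hasDerivAt_trace_add_smul_mul [Fintype n] {𝕜 : Type*} [NontriviallyNormedField 𝕜]
    (A E B : Matrix n n 𝕜) :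
    HasDerivAt (fun t : 𝕜 => ((A + t • E) * B).trace) (E * B).trace 0 := by
  simp_rw [Matrix.add_mul, trace_add, Matrix.smul_mul, trace_smul, smul_eq_mul]
  simpa using ((hasDerivAt_id (0 : 𝕜)).mul_const (E * B).trace).const_add (A * B).trace

theorem abs_dotProduct_mulVec_le [Fintype n] (E : Matrix n n ℝ) (x : n → ℝ) :
    |x ⬝ᵥ E *ᵥ x| ≤ (∑ a, ∑ b, |E a b|) * (x ⬝ᵥ x) := by
  have hsq : ∀ a, x a ^ 2 ≤ x ⬝ᵥ x := fun a => by
    simpa [dotProduct, sq] using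
      Finset.single_le_sum (fun b _ => mul_self_nonneg (x b)) (Finset.mem_univ a)
  have hterm : ∀ a b, |x a * (E a b * x b)| ≤ |E a b| * (x ⬝ᵥ x) := fun a b => by
    have : |x a| * |x b| ≤ x ⬝ᵥ x := by
      nlinarith [hsq a, hsq b, sq_abs (x a), sq_abs (x b), sq_nonneg (|x a| - |x b|)]
    rw [abs_mul, abs_mul]
    nlinarith [abs_nonneg (E a b)]
  calc |x ⬝ᵥ E *ᵥ x| = |∑ a, ∑ b, x a * (E a b * x b)| := by
        simp [dotProduct, mulVec, Finset.mul_sum]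
    _ ≤ ∑ a, ∑ b, |x a * (E a b * x b)| :=
        (Finset.abs_sum_le_sum_abs _ _).trans
          (Finset.sum_le_sum fun a _ => Finset.abs_sum_le_sum_abs _ _)
    _ ≤ ∑ a, ∑ b, |E a b| * (x ⬝ᵥ x) :=
        Finset.sum_le_sum fun a _ => Finset.sum_le_sum fun b _ => hterm a b
    _ = (∑ a, ∑ b, |E a b|) * (x ⬝ᵥ x) := by simp only [Finset.sum_mul]

open scoped MatrixOrder in
theorem PosDef.exists_pos_mul_dotProduct_self_le [Fintype n] [DecidableEq n] {S : Matrix n n ℝ}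
    (hS : S.PosDef) : ∃ c > 0, ∀ x : n → ℝ, c * (x ⬝ᵥ x) ≤ x ⬝ᵥ S *ᵥ x := by
  obtain ⟨c, hc, hcle⟩ : ∃ c > 0, ∀ k, c ≤ hS.1.eigenvalues k := by
    cases isEmpty_or_nonempty n
    · exact ⟨1, one_pos, isEmptyElim⟩
    · obtain ⟨k₀, hk₀⟩ := Finite.exists_min hS.1.eigenvalues
      exact ⟨_, hS.eigenvalues_pos k₀, hk₀⟩
  have hle : algebraMap ℝ (Matrix n n ℝ) c ≤ S := algebraMap_le_of_le_spectrum (by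
    rw [hS.1.spectrum_real_eq_range_eigenvalues]
    rintro _ ⟨k, rfl⟩
    exact hcle k) hS.1.isSelfAdjoint
  refine ⟨c, hc, fun x => ?_⟩
  simpa [Algebra.algebraMap_eq_smul_one, sub_mulVec, smul_mulVec, dotProduct_sub] using
    (Matrix.le_iff.mp hle).dotProduct_mulVec_nonneg x

theorem PosDef.eventually_add_smul [Fintype n] [DecidableEq n] {S E : Matrix n n ℝ} (hS : S.PosDef)
    (hE : E.IsHermitian) : ∀ᶠ t in 𝓝 (0 : ℝ), (S + t • E).PosDef := by
  obtain ⟨c, hc, hSc⟩ := hS.exists_pos_mul_dotProduct_self_le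
  filter_upwards [eventually_abs_mul_lt hc (∑ a, ∑ b, |E a b|)] with t ht
  refine PosDef.of_dotProduct_mulVec_pos (hS.1.add (hE.smul (IsSelfAdjoint.all t))) fun x hx => ?_
  have hxx : 0 < x ⬝ᵥ x := by simpa using dotProduct_self_star_pos_iff.mpr hx
  rw [star_trivial, add_mulVec, smul_mulVec, dotProduct_add, dotProduct_smul, smul_eq_mul]
  nlinarith [hSc x, neg_abs_le (t * (x ⬝ᵥ E *ᵥ x)), abs_mul t (x ⬝ᵥ E *ᵥ x),
    mul_le_mul_of_nonneg_left (abs_dotProduct_mulVec_le E x) (abs_nonneg t)]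

variable {R : Type*}

def symmSingle [DecidableEq n] [Semiring R] (i j : n) : Matrix n n R :=
  single i j 1 + single j i 1

theorem isHermitian_symmSingle [DecidableEq n] [Semiring R] [StarRing R] (i j : n) :
    (symmSingle i j : Matrix n n R).IsHermitian := by
  simp [IsHermitian, symmSingle, conjTranspose_single, add_comm]

theorem symmSingle_apply_eq_zero [DecidableEq n] [Semiring R] {S : Matrix n n R}
    (hS : S.IsSymm) {i j : n} (hij : S i j ≠ 0) {a b : n} (hab : S a b = 0) :
    (symmSingle i j : Matrix n n R) a b = 0 := by
  simp only [symmSingle, add_apply, single_apply]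
  split_ifs with h₁ h₂ h₂
  · obtain ⟨rfl, rfl⟩ := h₁
    exact absurd hab hij
  · obtain ⟨rfl, rfl⟩ := h₁
    exact absurd hab hij
  · obtain ⟨rfl, rfl⟩ := h₂
    exact absurd ((hS.apply i j).symm.trans hab) hij
  · simp

theorem trace_symmSingle_mul [Fintype n] [DecidableEq n] [CommSemiring R] {B : Matrix n n R}
    (hB : B.IsSymm) (i j : n) : (symmSingle i j * B).trace = 2 * B i j := by
  simp [symmSingle, Matrix.add_mul, trace_single_mul, hB.apply i j, two_mul]

end Matrix

theorem frobNorm_smul {p : ℕ} (t : ℝ) (A : Matrix (Fin p) (Fin p) ℝ) :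
    frobNorm (t • A) = |t| * frobNorm A := by
  simp only [frobNorm, Matrix.smul_apply, smul_eq_mul, mul_pow, ← Finset.mul_sum]
  rw [Real.sqrt_mul (sq_nonneg t), Real.sqrt_sq_eq_abs]

theorem eventually_l0Norm_add_smul_eq {p : ℕ} {S E : Matrix (Fin p) (Fin p) ℝ}
    (hE : ∀ a b, S a b = 0 → E a b = 0) :
    ∀ᶠ t in 𝓝 (0 : ℝ), l0Norm (S + t • E) = l0Norm S := by
  have hentry : ∀ ab : Fin p × Fin p,
      ∀ᶠ t in 𝓝 (0 : ℝ), ((S + t • E) ab.1 ab.2 ≠ 0 ↔ S ab.1 ab.2 ≠ 0) := by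
    rintro ⟨a, b⟩
    by_cases h : S a b = 0
    · simp [h, hE a b h]
    · have hcont : ContinuousAt (fun t : ℝ => S a b + t * E a b) 0 := by fun_prop
      filter_upwards [hcont.eventually_ne (by simpa using h)] with t ht
      simpa [h] using ht
  filter_upwards [eventually_all.2 hentry] with t ht
  simp only [l0Norm, ht]

theorem hasDerivAt_faObj_add_smul {p : ℕ} (μ : ℝ) (SigHat L S E : Matrix (Fin p) (Fin p) ℝ)
    (hLS : (L + S).det ≠ 0) :
    HasDerivAt (fun t : ℝ => faObj μ SigHat L (S + t • E))
      (μ * ((E * SigHat⁻¹).trace - ((L + S)⁻¹ * E).trace)) 0 := by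
  simp only [faObj, ← add_assoc L S]
  exact (((hasDerivAt_trace_add_smul_mul _ E _).sub
    (hasDerivAt_log_det_add_smul hLS E)).const_mul μ).const_add _

theorem l0_local_min_stationarity_general {p : ℕ}
    (SigHat : Matrix (Fin p) (Fin p) ℝ) (hSig : SigHat.PosDef)
    (μ lam : ℝ) (hμ : 0 < μ)
    (L : Matrix (Fin p) (Fin p) ℝ) (hL : L.PosSemidef)
    (S : Matrix (Fin p) (Fin p) ℝ) (hS : S.PosDef)
    (hloc : ∃ ε : ℝ, 0 < ε ∧
      ∀ S' : Matrix (Fin p) (Fin p) ℝ, S'.PosDef → frobNorm (S' - S) < ε →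
        faObj μ SigHat L S + lam * (l0Norm S : ℝ) ≤
          faObj μ SigHat L S' + lam * (l0Norm S' : ℝ)) :
    ∀ i j : Fin p, S i j ≠ 0 → (L + S)⁻¹ i j = SigHat⁻¹ i j := by
  intro i j hij
  obtain ⟨ε, hε, hmin⟩ := hloc
  have hA : (L + S).PosDef := PosDef.posSemidef_add hL hS
  have hline : IsLocalMin (fun t : ℝ => faObj μ SigHat L (S + t • symmSingle i j)) 0 := by
    filter_upwards [hS.eventually_add_smul (isHermitian_symmSingle i j),
      eventually_abs_mul_lt hε (frobNorm (symmSingle i j)),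
      eventually_l0Norm_add_smul_eq fun a b => symmSingle_apply_eq_zero (by simpa using hS.1) hij]
      with t hPD hfrob hl0
    have := hmin _ hPD (by rwa [add_sub_cancel_left, frobNorm_smul])
    rw [hl0] at this
    simpa using this
  have hderiv := hline.hasDerivAt_eq_zero
    (hasDerivAt_faObj_add_smul μ SigHat L S (symmSingle i j) hA.det_pos.ne')
  rw [trace_mul_comm (L + S)⁻¹, trace_symmSingle_mul (by simpa using hSig.1.inv),
    trace_symmSingle_mul (by simpa using hA.1.inv)] at hderiv
  have := (mul_eq_zero.mp hderiv).resolve_left hμ.ne'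
  linarith

/-- First-order necessary condition at a local minimizer of the ℓ0-regularized
objective `S' ↦ f(L,S') + λ‖S'‖₀` over symmetric positive definite matrices:
at every nonzero entry `(i,j)` of `S`, `[(L+S)⁻¹]ᵢⱼ = [Σ̂⁻¹]ᵢⱼ`. -/
theorem l0_local_min_stationarity {p : ℕ}
    (SigHat : Matrix (Fin p) (Fin p) ℝ) (hSig : SigHat.PosDef)
    (μ lam : ℝ) (hμ : 0 < μ) (hlam : 0 < lam)
    (L : Matrix (Fin p) (Fin p) ℝ) (hL : L.PosSemidef)
    (S : Matrix (Fin p) (Fin p) ℝ) (hS : S.PosDef)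
    (hloc : ∃ ε : ℝ, 0 < ε ∧
      ∀ S' : Matrix (Fin p) (Fin p) ℝ, S'.PosDef → frobNorm (S' - S) < ε →
        faObj μ SigHat L S + lam * (l0Norm S : ℝ) ≤
          faObj μ SigHat L S' + lam * (l0Norm S' : ℝ)) :
    ∀ i j : Fin p, S i j ≠ 0 → (L + S)⁻¹ i j = SigHat⁻¹ i j :=
  l0_local_min_stationarity_general SigHat hSig μ lam hμ L hL S hS hloc
end
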